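/- Assume r ≥ 2 and the positivity hypothesis. Then H(ℓ) = (Fin r → ℕ) if and only if H(ℓ) can be generated by r elements as an additive monoid and, for all indices j ≠ k, there exists a ∈ H(ℓ) with a_j > 0 and a_k = 0. -/
import Mathlib


/-- The additive submonoid `H(ℓ) = {a : Fin r → ℕ | ∑ i, a i • ℓ i ≥ 0}`. -/
def Hmono (r : ℕ) (ℓ : Fin r → ℤ) : AddSubmonoid (Fin r → ℕ) where
  carrier := {a | 0 ≤ ∑ i, (a i : ℤ) * ℓ i}
  zero_mem' := by simp
  add_mem' := by
    intro a b ha hb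
    simp only [Set.mem_setOf_eq, Pi.add_apply] at *
    have h : ∑ i, ((a i + b i : ℕ) : ℤ) * ℓ i
        = (∑ i, (a i : ℤ) * ℓ i) + ∑ i, (b i : ℤ) * ℓ i := by
      rw [← Finset.sum_add_distrib]
      apply Finset.sum_congr rfl
      intro i _
      push_cast
      ring
    rw [h]
    exact add_nonneg ha hb

lemma mem_Hmono {r : ℕ} {ℓ : Fin r → ℤ} {a : Fin r → ℕ} :
    a ∈ Hmono r ℓ ↔ 0 ≤ ∑ i, (a i : ℤ) * ℓ i := Iff.rfl

lemma coord_le_sum {r : ℕ} {m : Multiset (Fin r → ℕ)} {g} (hg : g ∈ m) (j : Fin r) :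
    g j ≤ m.sum j := by
  obtain ⟨m', rfl⟩ := Multiset.exists_cons_of_mem hg
  simp [Multiset.sum_cons]

lemma exists_pos_coord {r : ℕ} (m : Multiset (Fin r → ℕ)) {j : Fin r}
    (h : 0 < m.sum j) : ∃ g ∈ m, 0 < g j := by
  induction m using Multiset.induction with
  | empty => simp at h
  | cons a s ih =>
    rw [Multiset.sum_cons] at h
    by_cases h0 : 0 < a j
    · exact ⟨a, Multiset.mem_cons_self _ _, h0⟩
    · have : 0 < s.sum j := by
        have := Pi.add_apply a s.sum j
        omega
      obtain ⟨g, hg, hgj⟩ := ih this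
      exact ⟨g, Multiset.mem_cons_of_mem hg, hgj⟩

lemma sum_single_mul {r : ℕ} (ℓ : Fin r → ℤ) (j : Fin r) (c : ℕ) :
    ∑ i, (((Pi.single j c : Fin r → ℕ) i : ℤ)) * ℓ i = (c : ℤ) * ℓ j := by
  rw [Finset.sum_eq_single j]
  · simp
  · intro i _ hij
    simp [Pi.single_eq_of_ne hij]
  · simp

lemma single_injective {r : ℕ} : Function.Injective (fun i : Fin r => Pi.single i (1 : ℕ)) := by
  intro i j h
  by_contra hne
  have h2 : (Pi.single i 1 : Fin r → ℕ) = Pi.single j 1 := h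
  have := congrFun h2 j
  rw [Pi.single_eq_same, Pi.single_eq_of_ne (fun hji => hne hji.symm)] at this
  exact zero_ne_one this

/-- Artin's conjecture at `s₀` holds iff the toric ideal is zero and, for all `j ≠ k`,
there is `a ∈ H(ℓ)` with `a j > 0` and `a k = 0`. -/
theorem stmt10 (r : ℕ) (hr : 2 ≤ r) (ℓ : Fin r → ℤ)
    (hpos : (∃ j, ℓ j < 0) → ∃ i, 0 < ℓ i) :
    (Hmono r ℓ = ⊤) ↔
      ((∃ S : Finset (Fin r → ℕ), S.card = r ∧
          AddSubmonoid.closure (S : Set (Fin r → ℕ)) = Hmono r ℓ) ∧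
        ∀ j k : Fin r, j ≠ k → ∃ a ∈ Hmono r ℓ, 0 < a j ∧ a k = 0) := by
  constructor
  · intro htop
    refine ⟨⟨Finset.image (fun i => Pi.single i 1) Finset.univ, ?_, ?_⟩, ?_⟩
    · rw [Finset.card_image_of_injective _ single_injective, Finset.card_univ,
        Fintype.card_fin]
    · rw [htop, AddSubmonoid.eq_top_iff']
      intro a
      rw [← Finset.univ_sum_single a]
      apply AddSubmonoid.sum_mem
      intro i _
      have h1 : (Pi.single i (a i) : Fin r → ℕ) = a i • Pi.single i 1 := by
        rw [← Pi.single_smul, smul_eq_mul, mul_one]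
      rw [h1]
      apply AddSubmonoid.nsmul_mem
      apply AddSubmonoid.subset_closure
      exact Finset.mem_coe.2 (Finset.mem_image_of_mem _ (Finset.mem_univ i))
    · intro j k hjk
      have hmem : (Pi.single j 1 : Fin r → ℕ) ∈ Hmono r ℓ := by
        rw [htop]; exact AddSubmonoid.mem_top _
      refine ⟨Pi.single j 1, hmem, ?_, ?_⟩
      · rw [Pi.single_eq_same]; exact one_pos
      · exact Pi.single_eq_of_ne (fun h => hjk h.symm) _
  · rintro ⟨⟨S, hScard, hSclos⟩, hsep⟩
    have hle : ∀ j, 0 ≤ ℓ j := by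
      by_contra hc
      push_neg at hc
      obtain ⟨k₀, hk₀⟩ := hc
      obtain ⟨p, hp⟩ := hpos ⟨k₀, hk₀⟩
      have hSsub : ∀ g ∈ S, g ∈ Hmono r ℓ := by
        intro g hg
        rw [← hSclos]
        exact AddSubmonoid.subset_closure hg
      -- for each index j, produce a suitable generator
      have hgen : ∀ j : Fin r, ∃ g ∈ S, 0 < g j ∧ (∀ i, i ≠ p → i ≠ j → g i = 0) ∧
          (ℓ j < 0 → 0 < g p) ∧ (0 ≤ ℓ j → g = Pi.single j 1) := by
        intro j
        by_cases hj : 0 ≤ ℓ j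
        · -- `Pi.single j 1 ∈ H`, decompose into generators
          have hmem : (Pi.single j 1 : Fin r → ℕ) ∈ AddSubmonoid.closure (S : Set (Fin r → ℕ)) := by
            rw [hSclos, mem_Hmono, sum_single_mul]
            simpa using hj
          obtain ⟨m, hmS, hmsum⟩ := AddSubmonoid.exists_multiset_of_mem_closure hmem
          have hj1 : 0 < m.sum j := by rw [hmsum, Pi.single_eq_same]; exact one_pos
          obtain ⟨g, hgm, hgj⟩ := exists_pos_coord m hj1
          have hle' : ∀ i, g i ≤ (Pi.single j 1 : Fin r → ℕ) i := by
            intro i; rw [← hmsum]; exact coord_le_sum hgm i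
          have hgeq : g = Pi.single j 1 := by
            funext i
            by_cases hij : i = j
            · subst hij
              have := hle' i
              rw [Pi.single_eq_same] at this ⊢
              omega
            · have := hle' i
              rw [Pi.single_eq_of_ne hij] at this ⊢
              omega
          refine ⟨g, hmS g hgm, hgj, ?_, fun h => absurd hj (not_le.2 h), fun _ => hgeq⟩
          intro i hip hij
          rw [hgeq, Pi.single_eq_of_ne hij]
        · -- `ℓ j < 0`: use `M • e_p + e_j ∈ H`
          push_neg at hj
          have hpj : p ≠ j := fun h => absurd (h ▸ hp) (not_lt.2 hj.le)
          set M : ℕ := (-ℓ j).toNat with hM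
          have hMcast : (M : ℤ) = -ℓ j := Int.toNat_of_nonneg (by omega)
          set e : Fin r → ℕ := Pi.single p M + Pi.single j 1 with he
          have hesum : ∑ i, ((e i : ℤ)) * ℓ i = (M : ℤ) * ℓ p + ℓ j := by
            have : ∀ i, ((e i : ℤ)) * ℓ i
                = ((Pi.single p M : Fin r → ℕ) i : ℤ) * ℓ i
                  + ((Pi.single j 1 : Fin r → ℕ) i : ℤ) * ℓ i := by
              intro i
              rw [he, Pi.add_apply]
              push_cast
              ring
            rw [Finset.sum_congr rfl (fun i _ => this i), Finset.sum_add_distrib,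
              sum_single_mul, sum_single_mul]
            push_cast
            ring
          have hemem : e ∈ AddSubmonoid.closure (S : Set (Fin r → ℕ)) := by
            rw [hSclos, mem_Hmono, hesum, hMcast]
            nlinarith
          obtain ⟨m, hmS, hmsum⟩ := AddSubmonoid.exists_multiset_of_mem_closure hemem
          have hej : e j = 1 := by
            rw [he, Pi.add_apply, Pi.single_eq_of_ne (Ne.symm hpj), Pi.single_eq_same]
          have hj1 : 0 < m.sum j := by rw [hmsum, hej]; exact one_pos
          obtain ⟨g, hgm, hgj⟩ := exists_pos_coord m hj1
          have hle' : ∀ i, g i ≤ e i := by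
            intro i; rw [← hmsum]; exact coord_le_sum hgm i
          have hzero : ∀ i, i ≠ p → i ≠ j → g i = 0 := by
            intro i hip hij
            have := hle' i
            rw [he, Pi.add_apply, Pi.single_eq_of_ne hip, Pi.single_eq_of_ne hij] at this
            omega
          have hgj1 : g j = 1 := by
            have := hle' j
            rw [hej] at this
            omega
          -- g ∈ H, so its p-coordinate must be positive
          have hgH : 0 ≤ ∑ i, ((g i : ℤ)) * ℓ i := hSsub g (hmS g hgm)
          have hsum_eq : ∑ i, ((g i : ℤ)) * ℓ i = (g p : ℤ) * ℓ p + ℓ j := by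
            rw [Finset.sum_eq_add_of_mem p j (Finset.mem_univ p) (Finset.mem_univ j) hpj]
            · rw [hgj1]; push_cast; ring
            · intro i _ hi
              rw [hzero i hi.1 hi.2]
              simp
          have hgp : 0 < g p := by
            rcases Nat.eq_zero_or_pos (g p) with h0 | h0
            · rw [hsum_eq, h0] at hgH
              simp at hgH
              omega
            · exact h0
          exact ⟨g, hmS g hgm, hgj, hzero, fun _ => hgp, fun h => absurd h (not_le.2 hj)⟩
      choose f hfS hfpos hfzero hfneg hfnn using hgen
      have hfinj : Function.Injective f := by
        intro j j' hjj'
        by_contra hne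
        by_cases hj' : 0 ≤ ℓ j'
        · have h1 : f j' = Pi.single j' 1 := hfnn j' hj'
          by_cases hj : 0 ≤ ℓ j
          · have h2 : f j = Pi.single j 1 := hfnn j hj
            have heq : (Pi.single j 1 : Fin r → ℕ) = Pi.single j' 1 := by
              rw [← h2, ← h1, hjj']
            exact hne (single_injective heq)
          · push_neg at hj
            have hjp : j ≠ p := fun h => absurd (h ▸ hj) (not_lt.2 hp.le)
            have := hfpos j
            rw [hjj', h1, Pi.single_eq_of_ne (fun h : j = j' => hne h)] at this
            omega
        · push_neg at hj'
          have hj'p : j' ≠ p := fun h => absurd (h ▸ hj') (not_lt.2 hp.le)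
          have h0 : f j j' = 0 := hfzero j j' hj'p (fun h : j' = j => hne h.symm)
          have := hfpos j'
          rw [← hjj'] at this
          omega
      have hSimg : Finset.image f Finset.univ = S := by
        apply Finset.eq_of_subset_of_card_le
        · intro g hg
          obtain ⟨j, _, rfl⟩ := Finset.mem_image.1 hg
          exact hfS j
        · rw [Finset.card_image_of_injective _ hfinj, Finset.card_univ, Fintype.card_fin,
            hScard]
      -- every generator with positive k₀-coordinate has positive p-coordinate
      have hkey : ∀ g ∈ S, 0 < g k₀ → 0 < g p := by
        intro g hg hgk
        rw [← hSimg] at hg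
        obtain ⟨j, _, rfl⟩ := Finset.mem_image.1 hg
        by_cases hj : 0 ≤ ℓ j
        · have h1 : f j = Pi.single j 1 := hfnn j hj
          by_cases hjk : k₀ = j
          · exact absurd (hjk ▸ hj) (not_le.2 hk₀)
          · rw [h1, Pi.single_eq_of_ne hjk] at hgk
            omega
        · push_neg at hj
          by_cases hjk : k₀ = j
          · exact hfneg j hj
          · by_cases hkp : k₀ = p
            · exact absurd (hkp ▸ hp) (not_lt.2 hk₀.le)
            · rw [hfzero j k₀ hkp hjk] at hgk
              omega
      -- separation hypothesis gives a contradiction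
      have hk₀p : k₀ ≠ p := fun h => absurd (h ▸ hp) (not_lt.2 hk₀.le)
      obtain ⟨a, haH, hak, hap⟩ := hsep k₀ p hk₀p
      rw [← hSclos] at haH
      obtain ⟨m, hmS, hmsum⟩ := AddSubmonoid.exists_multiset_of_mem_closure haH
      have : 0 < m.sum k₀ := by rw [hmsum]; exact hak
      obtain ⟨g, hgm, hgk⟩ := exists_pos_coord m this
      have hgp := hkey g (hmS g hgm) hgk
      have := coord_le_sum hgm p
      rw [hmsum, hap] at this
      omega
    rw [AddSubmonoid.eq_top_iff']
    intro a
    rw [mem_Hmono]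
    exact Finset.sum_nonneg fun i _ => mul_nonneg (Int.natCast_nonneg _) (hle i)
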